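/- There exists a constant c > 0 such that for all x₃ > 0 and all t > 0, ∫₀ᵗ ∫_{ℝ₊³} (|x−z*|² + (t−τ))^(-2) dz dτ ≤ c · t/x₃, where z* = (z₁, z₂, −z₃) denotes reflection across the boundary plane and x = (0,0,x₃). -/

import Mathlib

open MeasureTheory Real Set Filter Topology

/-! The integrand is dominated by a product of one-dimensional Cauchy kernels: with `a = x₃ + z₃`,
`(z₁² + z₂² + a² + s)² ≥ (z₁² + a²)(z₂² + a²)`. Integrating in `(z₁, z₂)` gives `π² / a²`, and then
in `z₃ > 0` gives `π² / x₃`, uniformly in `τ`; integrating over `τ ∈ (0, t]` yields `c = π²`. -/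

theorem integrable_inv_sq_add_sq {a : ℝ} (ha : a ≠ 0) :
    Integrable fun y : ℝ => (y ^ 2 + a ^ 2)⁻¹ := by
  convert (integrable_inv_one_add_sq.comp_div ha).const_mul (a ^ 2)⁻¹ using 2 with y
  field_simp
  ring

theorem integral_univ_inv_sq_add_sq {a : ℝ} (ha : 0 < a) :
    ∫ y : ℝ, (y ^ 2 + a ^ 2)⁻¹ = π / a := calc
  _ = ∫ y : ℝ, (a ^ 2)⁻¹ * (1 + (y / a) ^ 2)⁻¹ := by
    congr 1 with y
    field_simp
    ring
  _ = π / a := by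
    rw [integral_const_mul, Measure.integral_comp_div (fun y => (1 + y ^ 2)⁻¹),
      integral_univ_inv_one_add_sq, smul_eq_mul, abs_of_pos ha]
    field_simp

theorem integrable_inv_sq_add_sq_mul_inv_sq_add_sq {a : ℝ} (ha : a ≠ 0) :
    Integrable fun p : ℝ × ℝ => (p.1 ^ 2 + a ^ 2)⁻¹ * (p.2 ^ 2 + a ^ 2)⁻¹ :=
  (integrable_inv_sq_add_sq ha).mul_prod (integrable_inv_sq_add_sq ha)

theorem integral_inv_sq_add_sq_mul_inv_sq_add_sq {a : ℝ} (ha : 0 < a) :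
    ∫ p : ℝ × ℝ, (p.1 ^ 2 + a ^ 2)⁻¹ * (p.2 ^ 2 + a ^ 2)⁻¹ = π ^ 2 / a ^ 2 := by
  rw [Measure.volume_eq_prod, integral_prod_mul (fun y : ℝ => (y ^ 2 + a ^ 2)⁻¹)
    (fun y : ℝ => (y ^ 2 + a ^ 2)⁻¹), integral_univ_inv_sq_add_sq ha]
  ring

theorem hasDerivAt_neg_inv_add {b x : ℝ} (hx : b + x ≠ 0) :
    HasDerivAt (fun x => -(b + x)⁻¹) ((b + x) ^ 2)⁻¹ x := by
  simpa [neg_div] using (((hasDerivAt_id x).const_add b).fun_inv hx).fun_neg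

theorem tendsto_neg_inv_add_atTop (b : ℝ) :
    Tendsto (fun x : ℝ => -(b + x)⁻¹) atTop (𝓝 0) := by
  simpa using (tendsto_inv_atTop_zero.comp (tendsto_atTop_add_const_left _ b tendsto_id)).neg

theorem integrableOn_Ioi_inv_add_sq {b : ℝ} (hb : 0 < b) :
    IntegrableOn (fun x => ((b + x) ^ 2)⁻¹) (Ioi 0) :=
  integrableOn_Ioi_deriv_of_nonneg'
    (fun x hx => hasDerivAt_neg_inv_add (by linarith [mem_Ici.1 hx]))
    (fun x _ => by positivity) (tendsto_neg_inv_add_atTop b)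

theorem integral_Ioi_inv_add_sq {b : ℝ} (hb : 0 < b) :
    ∫ x in Ioi 0, ((b + x) ^ 2)⁻¹ = b⁻¹ := by
  rw [integral_Ioi_of_hasDerivAt_of_nonneg'
    (fun x hx => hasDerivAt_neg_inv_add (by linarith [mem_Ici.1 hx]))
    (fun x _ => by positivity) (tendsto_neg_inv_add_atTop b)]
  simp

theorem rpow_neg_two_le_inv_mul_inv (u v a s : ℝ) (ha : a ≠ 0) (hs : 0 ≤ s) :
    (u ^ 2 + v ^ 2 + a ^ 2 + s) ^ (-(2 : ℝ)) ≤ (u ^ 2 + a ^ 2)⁻¹ * (v ^ 2 + a ^ 2)⁻¹ := by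
  have hprod : (u ^ 2 + a ^ 2) * (v ^ 2 + a ^ 2) ≤ (u ^ 2 + v ^ 2 + a ^ 2 + s) ^ 2 := by
    nlinarith [sq_nonneg u, sq_nonneg v, sq_nonneg a, mul_nonneg (sq_nonneg u) (sq_nonneg v)]
  rw [rpow_neg (by positivity), rpow_two, ← mul_inv]
  exact inv_anti₀ (by positivity) hprod

/-- Coordinates `z ↦ (z₃, (z₁, z₂))` on `ℝ³`. -/
noncomputable def EuclideanSpace.lastCoordEquiv : EuclideanSpace ℝ (Fin 3) ≃ᵐ ℝ × ℝ × ℝ :=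
  (MeasurableEquiv.toLp 2 (Fin 3 → ℝ)).symm.trans
    ((MeasurableEquiv.piFinSuccAbove (fun _ : Fin 3 => ℝ) 2).trans
      ((MeasurableEquiv.refl ℝ).prodCongr MeasurableEquiv.finTwoArrow))

theorem EuclideanSpace.measurePreserving_lastCoordEquiv_symm :
    MeasurePreserving EuclideanSpace.lastCoordEquiv.symm volume volume := by
  refine MeasurePreserving.symm _ ?_
  exact (((MeasurePreserving.id volume).prod (volume_preserving_finTwoArrow ℝ)).comp
    (volume_preserving_piFinSuccAbove (fun _ : Fin 3 => ℝ) 2)).comp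
    (EuclideanSpace.volume_preserving_symm_measurableEquiv_toLp (Fin 3))

theorem setIntegral_upperHalfSpace_eq (f : EuclideanSpace ℝ (Fin 3) → ℝ) :
    ∫ z in {z : EuclideanSpace ℝ (Fin 3) | 0 < z 2}, f z =
      ∫ p, f (EuclideanSpace.lastCoordEquiv.symm p) ∂(volume.restrict (Ioi 0)).prod volume := by
  rw [← EuclideanSpace.measurePreserving_lastCoordEquiv_symm.setIntegral_preimage_emb
    (MeasurableEquiv.measurableEmbedding _)]
  have hpre : EuclideanSpace.lastCoordEquiv.symm ⁻¹' {z : EuclideanSpace ℝ (Fin 3) | 0 < z 2}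
      = Ioi 0 ×ˢ univ := by
    ext p
    have hlast : EuclideanSpace.lastCoordEquiv.symm p 2 = p.1 := rfl
    simp [hlast]
  rw [hpre, ← Measure.restrict_univ (μ := (volume : Measure (ℝ × ℝ))), Measure.prod_restrict,
    ← Measure.volume_eq_prod]

theorem integral_upperHalfSpace_le {b s : ℝ} (hb : 0 < b) (hs : 0 ≤ s) :
    ∫ z in {z : EuclideanSpace ℝ (Fin 3) | 0 < z 2},
        ((z 0) ^ 2 + (z 1) ^ 2 + (b + z 2) ^ 2 + s) ^ (-(2 : ℝ)) ≤ π ^ 2 / b := by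
  set μ : Measure (ℝ × ℝ × ℝ) := (volume.restrict (Ioi 0)).prod volume
  let M : ℝ × ℝ × ℝ → ℝ := fun p => (p.2.1 ^ 2 + (b + p.1) ^ 2)⁻¹ * (p.2.2 ^ 2 + (b + p.1) ^ 2)⁻¹
  have hfiber : ∀ x ∈ Ioi (0 : ℝ), ∫ y, M (x, y) = π ^ 2 * ((b + x) ^ 2)⁻¹ := fun x hx =>
    (integral_inv_sq_add_sq_mul_inv_sq_add_sq (a := b + x) (by linarith [mem_Ioi.1 hx])).trans
      (div_eq_mul_inv _ _)
  have hpos : ∀ᵐ p ∂μ, p.1 ∈ Ioi 0 :=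
    Measure.quasiMeasurePreserving_fst.ae (ae_restrict_mem measurableSet_Ioi)
  have hM : Integrable M μ := by
    refine (integrable_prod_iff (by fun_prop)).2 ⟨?_, ?_⟩
    · filter_upwards [ae_restrict_mem measurableSet_Ioi] with x hx
      exact integrable_inv_sq_add_sq_mul_inv_sq_add_sq (a := b + x) (by linarith [mem_Ioi.1 hx])
    · refine ((integrableOn_Ioi_inv_add_sq hb).const_mul (π ^ 2)).congr ?_
      filter_upwards [ae_restrict_mem measurableSet_Ioi] with x hx
      simp_rw [Real.norm_of_nonneg (by positivity : 0 ≤ M (x, _))]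
      exact (hfiber x hx).symm
  calc _ = ∫ p, (p.2.1 ^ 2 + p.2.2 ^ 2 + (b + p.1) ^ 2 + s) ^ (-(2 : ℝ)) ∂μ :=
        setIntegral_upperHalfSpace_eq _
    _ ≤ ∫ p, M p ∂μ := by
        refine integral_mono_of_nonneg (.of_forall fun p => by positivity) hM ?_
        filter_upwards [hpos] with p hp
        exact rpow_neg_two_le_inv_mul_inv _ _ _ _ (by linarith [mem_Ioi.1 hp]) hs
    _ = π ^ 2 / b := by
        rw [integral_prod _ hM, setIntegral_congr_fun measurableSet_Ioi hfiber,
          integral_const_mul, integral_Ioi_inv_add_sq hb, div_eq_mul_inv]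

/-- There is `c > 0` such that for all `x₃ > 0`, `t > 0`,
`∫₀ᵗ ∫_{ℝ₊³} (|x − z*|² + (t−τ))^(-2) dz dτ ≤ c t / x₃`, where `x = (0,0,x₃)` and
`z* = (z₁, z₂, −z₃)`, so that `|x − z*|² = z₁² + z₂² + (x₃ + z₃)²`. -/
theorem reflected_kernel_integral_bound :
    ∃ c : ℝ, 0 < c ∧ ∀ x₃ t : ℝ, 0 < x₃ → 0 < t →
      (∫ τ in Ioc (0:ℝ) t, ∫ z in {z : EuclideanSpace ℝ (Fin 3) | 0 < z 2},
          ((z 0)^2 + (z 1)^2 + (x₃ + z 2)^2 + (t - τ)) ^ (-(2:ℝ))) ≤ c * t / x₃ := by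
  refine ⟨π ^ 2, by positivity, fun x₃ t hx₃ ht => ?_⟩
  have hinner : ∀ τ ∈ Ioc 0 t, ‖∫ z in {z : EuclideanSpace ℝ (Fin 3) | 0 < z 2},
      ((z 0)^2 + (z 1)^2 + (x₃ + z 2)^2 + (t - τ)) ^ (-(2:ℝ))‖ ≤ π ^ 2 / x₃ := fun τ hτ => by
    have hs : 0 ≤ t - τ := sub_nonneg.2 hτ.2
    rw [norm_of_nonneg (integral_nonneg fun z => by positivity)]
    exact integral_upperHalfSpace_le hx₃ hs
  calc _ ≤ ‖_‖ := le_norm_self _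
    _ ≤ π ^ 2 / x₃ * volume.real (Ioc 0 t) :=
      norm_setIntegral_le_of_norm_le_const measure_Ioc_lt_top hinner
    _ = π ^ 2 * t / x₃ := by
      rw [volume_real_Ioc_of_le ht.le]
      ring
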